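/- arXiv:1111.2541 — 5 statements merged into one kernel-verified Lean document; each statement's English description precedes it below -/
import Mathlib

section
/- Let p, q ≥ 1 be integers and K ∈ 𝕂^{p,q}. Let φ : ℝ² → ℝ be 1-periodic in each of its two variables, with all partial derivatives up to order q continuous and bounded, and let v̄ := ∫₀¹∫₀¹ φ(y,s) dy ds be its mean value. Then there exists C > 0, depending only on K and φ, such that for all ε, η, τ > 0: | v̄ − ∫_ℝ∫_ℝ K_η(ξ) K_τ(s) φ(ξ/ε, s/ε) dξ ds | ≤ C [ (ε/η)^q + (ε/τ)^q ]. -/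
/-!
A continuous 1-periodic `g` with mean zero has a 1-periodic primitive; normalized to have mean
zero, it is again of this kind and bounded by twice the bound on `g`. Let `G_q` be the `q`-th
such primitive of `g - ⨍ g`. Integrating by parts `q` times against the compactly
supported kernel (no boundary terms) gives
`∫ K(x) g(c x) dx = ⨍ g + (-c⁻¹)^q ∫ K⁽ᑫ⁾(x) G_q(c x) dx`, hence an error `O(c⁻ᑫ)` with
`c = η / ε`. In two variables, apply this in `s` for each fixed `ξ`, then in `ξ` to the partial
mean `ψ(y) = ∫₀¹ φ(y, s) ds`.
-/

open MeasureTheory Set Function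

noncomputable def meanZeroPrimitive (g : ℝ → ℝ) (x : ℝ) : ℝ :=
  (∫ t in (0 : ℝ)..x, g t) - ∫ u in (0 : ℝ)..1, ∫ t in (0 : ℝ)..u, g t

structure IsMeanZeroPeriodic (g : ℝ → ℝ) : Prop where
  continuous : Continuous g
  periodic : Periodic g 1
  intervalIntegral_eq_zero : ∫ t in (0 : ℝ)..1, g t = 0

theorem abs_intervalIntegral_le_of_abs_le {g : ℝ → ℝ} {B : ℝ} (hB : ∀ x, |g x| ≤ B) (a b : ℝ) :
    |∫ t in a..b, g t| ≤ B * |b - a| :=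
  intervalIntegral.norm_integral_le_of_norm_le_const (f := g) fun x _ => hB x

section meanZeroPrimitive

variable {g : ℝ → ℝ}

theorem hasDerivAt_meanZeroPrimitive (hg : Continuous g) (x : ℝ) :
    HasDerivAt (meanZeroPrimitive g) (g x) x :=
  (intervalIntegral.integral_hasDerivAt_right (hg.intervalIntegrable 0 x)
    (hg.stronglyMeasurableAtFilter _ _) hg.continuousAt).sub_const _

theorem continuous_meanZeroPrimitive (hg : Continuous g) : Continuous (meanZeroPrimitive g) :=
  continuous_iff_continuousAt.2 fun x => (hasDerivAt_meanZeroPrimitive hg x).continuousAt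

theorem intervalIntegral_meanZeroPrimitive (hg : Continuous g) :
    ∫ t in (0 : ℝ)..1, meanZeroPrimitive g t = 0 := by
  have hprim : Continuous fun x => ∫ t in (0 : ℝ)..x, g t :=
    intervalIntegral.continuous_primitive (fun a b => hg.intervalIntegrable a b) 0
  simp only [meanZeroPrimitive]
  rw [intervalIntegral.integral_sub (hprim.intervalIntegrable _ _)
    intervalIntegrable_const]
  simp

theorem isMeanZeroPeriodic_meanZeroPrimitive (hg : IsMeanZeroPeriodic g) :
    IsMeanZeroPeriodic (meanZeroPrimitive g) where
  continuous := continuous_meanZeroPrimitive hg.continuous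
  periodic x := by
    have hsplit := intervalIntegral.integral_add_adjacent_intervals
      (hg.continuous.intervalIntegrable (μ := volume) 0 x)
      (hg.continuous.intervalIntegrable x (x + 1))
    rw [hg.periodic.intervalIntegral_add_eq x 0, zero_add, hg.intervalIntegral_eq_zero,
      add_zero] at hsplit
    simp only [meanZeroPrimitive, hsplit]
  intervalIntegral_eq_zero := intervalIntegral_meanZeroPrimitive hg.continuous

theorem isMeanZeroPeriodic_iterate_meanZeroPrimitive (hg : IsMeanZeroPeriodic g) (n : ℕ) :
    IsMeanZeroPeriodic (meanZeroPrimitive^[n] g) := by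
  induction n with
  | zero => exact hg
  | succ n ih => rw [iterate_succ_apply']; exact isMeanZeroPeriodic_meanZeroPrimitive ih

theorem abs_meanZeroPrimitive_le (hg : IsMeanZeroPeriodic g) {B : ℝ}
    (hB : ∀ x, |g x| ≤ B) (x : ℝ) : |meanZeroPrimitive g x| ≤ 2 * B := by
  have hprim : ∀ y ∈ Icc (0 : ℝ) 1, |∫ t in (0 : ℝ)..y, g t| ≤ B := fun y hy => by
    have hB0 : 0 ≤ B := (abs_nonneg _).trans (hB 0)
    calc |∫ t in (0 : ℝ)..y, g t| ≤ B * |y - 0| := abs_intervalIntegral_le_of_abs_le hB 0 y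
      _ ≤ B * 1 := by gcongr; rw [sub_zero, abs_of_nonneg hy.1]; exact hy.2
      _ = B := mul_one B
  have hmean : |∫ u in (0 : ℝ)..1, ∫ t in (0 : ℝ)..u, g t| ≤ B := by
    simpa using intervalIntegral.norm_integral_le_of_norm_le_const (a := 0) (b := 1)
      (f := fun u => ∫ t in (0 : ℝ)..u, g t)
      fun u hu => hprim u (Ioc_subset_Icc_self (by simpa using hu))
  obtain ⟨y, hy, hxy⟩ :=
    (isMeanZeroPeriodic_meanZeroPrimitive hg).periodic.exists_mem_Ico₀ one_pos x
  rw [hxy]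
  calc |meanZeroPrimitive g y|
      ≤ |∫ t in (0 : ℝ)..y, g t| + |∫ u in (0 : ℝ)..1, ∫ t in (0 : ℝ)..u, g t| := abs_sub _ _
    _ ≤ 2 * B := by linarith [hprim y (Ico_subset_Icc_self hy)]

theorem abs_iterate_meanZeroPrimitive_le (hg : IsMeanZeroPeriodic g)
    {B : ℝ} (hB : ∀ x, |g x| ≤ B) (n : ℕ) (x : ℝ) :
    |(meanZeroPrimitive^[n] g) x| ≤ 2 ^ n * B := by
  induction n generalizing x with
  | zero => simpa using hB x
  | succ n ih =>
    rw [iterate_succ_apply', pow_succ', mul_assoc]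
    exact abs_meanZeroPrimitive_le (isMeanZeroPeriodic_iterate_meanZeroPrimitive hg n) ih x

end meanZeroPrimitive

section kernel

variable {k : ℝ → ℝ}

theorem HasCompactSupport.iteratedDeriv (hk : HasCompactSupport k) (n : ℕ) :
    HasCompactSupport (iteratedDeriv n k) := by
  induction n with
  | zero => simpa using hk
  | succ n ih => rw [iteratedDeriv_succ]; exact ih.deriv

theorem HasCompactSupport.integrable_mul (hk : HasCompactSupport k) (hkc : Continuous k)
    {f : ℝ → ℝ} (hf : Continuous f) : Integrable fun x => k x * f x :=
  (hkc.mul hf).integrable_of_hasCompactSupport hk.mul_right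

theorem HasCompactSupport.continuous_integral_mul {X : Type*} [TopologicalSpace X]
    [FirstCountableTopology X] [LocallyCompactSpace X] (hk : HasCompactSupport k)
    (hkc : Continuous k) {f : X → ℝ → ℝ} (hf : Continuous (uncurry f)) :
    Continuous fun a => ∫ x, k x * f a x := by
  have hrestrict : (fun a => ∫ x, k x * f a x) = fun a => ∫ x in tsupport k, k x * f a x :=
    funext fun a => (setIntegral_eq_integral_of_forall_compl_eq_zero fun x hx => by
      rw [image_eq_zero_of_notMem_tsupport hx, zero_mul]).symm
  rw [hrestrict]
  exact continuous_parametric_integral_of_continuous (by fun_prop) hk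

theorem abs_integral_mul_le_of_abs_le (hk : Integrable k) {f : ℝ → ℝ} {B : ℝ}
    (hB : ∀ x, |f x| ≤ B) : |∫ x, k x * f x| ≤ (∫ x, |k x|) * B := by
  rw [← integral_mul_const]
  refine norm_integral_le_of_norm_le (f := fun x => k x * f x) (hk.abs.mul_const B)
    (.of_forall fun x => ?_)
  rw [Real.norm_eq_abs, abs_mul]
  exact mul_le_mul_of_nonneg_left (hB x) (abs_nonneg _)

theorem integral_inv_mul_comp_div_mul (f : ℝ → ℝ) {η : ℝ} (hη : 0 < η) :
    ∫ ξ, η⁻¹ * k (ξ / η) * f ξ = ∫ x, k x * f (η * x) := by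
  have hscale := Measure.integral_comp_mul_left (fun ξ => k (ξ / η) * f ξ) η
  simp only [mul_div_cancel_left₀ _ hη.ne', abs_inv, abs_of_pos hη, smul_eq_mul] at hscale
  rw [hscale, ← integral_const_mul]
  simp only [mul_assoc]

variable {g : ℝ → ℝ} {c : ℝ}

theorem integral_mul_comp_mul_eq_neg_inv_mul_meanZeroPrimitive (hk : ContDiff ℝ 1 k)
    (hks : HasCompactSupport k) (hg : Continuous g) (hc : c ≠ 0) :
    ∫ x, k x * g (c * x) = -c⁻¹ * ∫ x, deriv k x * meanZeroPrimitive g (c * x) := by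
  have hv : ∀ x, HasDerivAt (fun x => c⁻¹ * meanZeroPrimitive g (c * x)) (g (c * x)) x := by
    intro x
    have := ((hasDerivAt_meanZeroPrimitive hg (c * x)).comp x
      ((hasDerivAt_id x).const_mul c)).const_mul c⁻¹
    simpa [inv_mul_cancel_left₀ hc, mul_comm] using this
  have hPc : Continuous fun x => meanZeroPrimitive g (c * x) :=
    (continuous_meanZeroPrimitive hg).comp (continuous_const.mul continuous_id)
  rw [integral_mul_deriv_eq_deriv_mul_of_integrable
    (fun x _ => (hk.differentiable one_ne_zero x).hasDerivAt) (fun x _ => hv x)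
    (hks.integrable_mul hk.continuous (hg.comp (continuous_const.mul continuous_id)))
    (hks.deriv.integrable_mul (hk.continuous_deriv le_rfl) (continuous_const.mul hPc))
    (hks.integrable_mul hk.continuous (continuous_const.mul hPc))]
  simp only [mul_left_comm _ c⁻¹, integral_const_mul, neg_mul]

theorem integral_mul_comp_mul_eq_iteratedDeriv_mul_iterate_meanZeroPrimitive (n : ℕ)
    (hk : ContDiff ℝ n k) (hks : HasCompactSupport k) (hg : Continuous g) (hc : c ≠ 0) :
    ∫ x, k x * g (c * x) =
      (-c⁻¹) ^ n * ∫ x, iteratedDeriv n k x * (meanZeroPrimitive^[n] g) (c * x) := by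
  induction n generalizing k g with
  | zero => simp
  | succ n ih =>
    have hk' : ContDiff ℝ n (deriv k) := by
      simpa using (contDiff_succ_iff_deriv.mp hk).2.2
    rw [integral_mul_comp_mul_eq_neg_inv_mul_meanZeroPrimitive (hk.of_le (by simp)) hks hg hc,
      ih hk' hks.deriv (continuous_meanZeroPrimitive hg), iteratedDeriv_succ', iterate_succ_apply,
      pow_succ']
    ring

end kernel

theorem abs_intervalIntegral_sub_integral_mul_comp_mul_le {K g : ℝ → ℝ} {q : ℕ} {B c : ℝ}
    (hK : ContDiff ℝ q K) (hKs : HasCompactSupport K) (hKint : ∫ x, K x = 1)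
    (hg : Continuous g) (hper : Periodic g 1) (hB : ∀ x, |g x| ≤ B) (hc : 0 < c) :
    |(∫ t in (0 : ℝ)..1, g t) - ∫ x, K x * g (c * x)| ≤
      (∫ x, |iteratedDeriv q K x|) * (2 ^ q * (2 * B)) * c⁻¹ ^ q := by
  set m := ∫ t in (0 : ℝ)..1, g t
  have hm : |m| ≤ B := by simpa using abs_intervalIntegral_le_of_abs_le hB 0 1
  have hg₀ : IsMeanZeroPeriodic fun x => g x - m := by
    refine ⟨hg.sub continuous_const, fun x => by simp [hper x], ?_⟩
    rw [intervalIntegral.integral_sub (hg.intervalIntegrable 0 1) intervalIntegrable_const]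
    simp [m]
  have hg₀B : ∀ x, |g x - m| ≤ 2 * B := fun x => by linarith [abs_sub (g x) m, hB x]
  have hgc : Continuous fun x => g (c * x) := by fun_prop
  have hsplit : ∫ x, K x * g (c * x) = (∫ x, K x * (g (c * x) - m)) + m := by
    simp only [mul_sub]
    rw [integral_sub (hKs.integrable_mul hK.continuous hgc)
      (hKs.integrable_mul hK.continuous continuous_const), integral_mul_const, hKint]
    ring
  have hKq : Integrable (iteratedDeriv q K) :=
    (hK.continuous_iteratedDeriv q le_rfl).integrable_of_hasCompactSupport (hKs.iteratedDeriv q)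
  rw [hsplit, integral_mul_comp_mul_eq_iteratedDeriv_mul_iterate_meanZeroPrimitive q hK hKs
    hg₀.continuous hc.ne']
  set I := ∫ x, iteratedDeriv q K x * (meanZeroPrimitive^[q] fun x => g x - m) (c * x)
  calc |m - ((-c⁻¹) ^ q * I + m)| = c⁻¹ ^ q * |I| := by
        rw [sub_add_cancel_right, abs_neg, abs_mul, abs_pow, abs_neg, abs_inv, abs_of_pos hc]
    _ ≤ c⁻¹ ^ q * ((∫ x, |iteratedDeriv q K x|) * (2 ^ q * (2 * B))) := by
        gcongr
        exact abs_integral_mul_le_of_abs_le hKq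
          fun x => abs_iterate_meanZeroPrimitive_le hg₀ hg₀B q (c * x)
    _ = (∫ x, |iteratedDeriv q K x|) * (2 ^ q * (2 * B)) * c⁻¹ ^ q := by ring

theorem abs_intervalIntegral_sub_integral_kernel_le {K g : ℝ → ℝ} {q : ℕ} {B ε η : ℝ}
    (hK : ContDiff ℝ q K) (hKs : HasCompactSupport K) (hKint : ∫ x, K x = 1)
    (hg : Continuous g) (hper : Periodic g 1) (hB : ∀ x, |g x| ≤ B) (hε : 0 < ε) (hη : 0 < η) :
    |(∫ t in (0 : ℝ)..1, g t) - ∫ ξ, η⁻¹ * K (ξ / η) * g (ξ / ε)| ≤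
      (∫ x, |iteratedDeriv q K x|) * (2 ^ q * (2 * B)) * (ε / η) ^ q := by
  rw [integral_inv_mul_comp_div_mul _ hη]
  simp_rw [mul_div_right_comm η]
  simpa using abs_intervalIntegral_sub_integral_mul_comp_mul_le hK hKs hKint hg hper hB
    (div_pos hη hε)

theorem abs_integral_kernel_sub_le {K f f' : ℝ → ℝ} {δ η : ℝ} (hKc : Continuous K)
    (hKs : HasCompactSupport K) (hf : Continuous f) (hf' : Continuous f')
    (hδ : ∀ ξ, |f ξ - f' ξ| ≤ δ) (hη : 0 < η) :
    |(∫ ξ, η⁻¹ * K (ξ / η) * f ξ) - ∫ ξ, η⁻¹ * K (ξ / η) * f' ξ| ≤ (∫ x, |K x|) * δ := by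
  rw [integral_inv_mul_comp_div_mul _ hη, integral_inv_mul_comp_div_mul _ hη,
    ← integral_sub (hKs.integrable_mul hKc (f := fun x => f (η * x)) (by fun_prop))
      (hKs.integrable_mul hKc (f := fun x => f' (η * x)) (by fun_prop))]
  simp only [← mul_sub]
  exact abs_integral_mul_le_of_abs_le (hKc.integrable_of_hasCompactSupport hKs) fun x => hδ _

theorem abs_intervalIntegral_sub_integral_kernel_mul_kernel_le {K : ℝ → ℝ} {φ : ℝ → ℝ → ℝ}
    {q : ℕ} {M ε η τ : ℝ} (hK : ContDiff ℝ q K) (hKs : HasCompactSupport K)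
    (hKint : ∫ x, K x = 1) (hφ : Continuous (uncurry φ)) (hφM : ∀ y s, |φ y s| ≤ M)
    (hper1 : ∀ y s, φ (y + 1) s = φ y s) (hper2 : ∀ y s, φ y (s + 1) = φ y s)
    (hε : 0 < ε) (hη : 0 < η) (hτ : 0 < τ) :
    |(∫ y in (0 : ℝ)..1, ∫ s in (0 : ℝ)..1, φ y s) -
        ∫ ξ, ∫ s, (η⁻¹ * K (ξ / η)) * (τ⁻¹ * K (s / τ)) * φ (ξ / ε) (s / ε)| ≤
      (∫ x, |iteratedDeriv q K x|) * (2 ^ q * (2 * M)) *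
        ((ε / η) ^ q + (∫ x, |K x|) * (ε / τ) ^ q) := by
  set A := (∫ x, |iteratedDeriv q K x|) * (2 ^ q * (2 * M))
  set ψ := fun y => ∫ s in (0 : ℝ)..1, φ y s
  set F := fun ξ => ∫ s, τ⁻¹ * K (s / τ) * φ (ξ / ε) (s / ε)
  have hψM : ∀ y, |ψ y| ≤ M := fun y => by
    simpa using abs_intervalIntegral_le_of_abs_le (hφM y) 0 1
  have hF : Continuous F := by
    simp only [F, integral_inv_mul_comp_div_mul _ hτ]
    exact hKs.continuous_integral_mul hK.continuous (f := fun ξ x => φ (ξ / ε) (τ * x / ε))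
      (by fun_prop)
  have houter : |(∫ y in (0 : ℝ)..1, ψ y) - ∫ ξ, η⁻¹ * K (ξ / η) * ψ (ξ / ε)| ≤
      A * (ε / η) ^ q :=
    abs_intervalIntegral_sub_integral_kernel_le hK hKs hKint
      (intervalIntegral.continuous_parametric_intervalIntegral_of_continuous' hφ 0 1)
      (fun y => intervalIntegral.integral_congr fun s _ => hper1 y s) hψM hε hη
  have hinner : ∀ ξ, |ψ (ξ / ε) - F ξ| ≤ A * (ε / τ) ^ q := fun ξ =>
    abs_intervalIntegral_sub_integral_kernel_le hK hKs hKint (by fun_prop)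
      (fun s => hper2 (ξ / ε) s) (hφM (ξ / ε)) hε hτ
  have hswap := abs_integral_kernel_sub_le hK.continuous hKs (by fun_prop) hF hinner hη
  have hdouble : ∫ ξ, ∫ s, (η⁻¹ * K (ξ / η)) * (τ⁻¹ * K (s / τ)) * φ (ξ / ε) (s / ε) =
      ∫ ξ, η⁻¹ * K (ξ / η) * F ξ := by
    simp only [F, mul_assoc, integral_const_mul]
  rw [hdouble]
  calc _ ≤ |(∫ y in (0 : ℝ)..1, ψ y) - ∫ ξ, η⁻¹ * K (ξ / η) * ψ (ξ / ε)| +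
        |(∫ ξ, η⁻¹ * K (ξ / η) * ψ (ξ / ε)) - ∫ ξ, η⁻¹ * K (ξ / η) * F ξ| := abs_sub_le _ _ _
    _ ≤ A * (ε / η) ^ q + (∫ x, |K x|) * (A * (ε / τ) ^ q) := add_le_add houter hswap
    _ = A * ((ε / η) ^ q + (∫ x, |K x|) * (ε / τ) ^ q) := by ring

theorem stmt_2_general (q : ℕ)
    (K : ℝ → ℝ) (hK : ContDiff ℝ (q : ℕ∞) K)
    (hKsupp : Function.support K ⊆ Icc (-1 : ℝ) 1)
    (hKint : ∫ x : ℝ, K x = 1)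
    (φ : ℝ → ℝ → ℝ)
    (hφ : ContDiff ℝ (q : ℕ∞) fun z : ℝ × ℝ => φ z.1 z.2)
    (hφbdd : ∀ i : ℕ, i ≤ q → ∃ M : ℝ, ∀ z : ℝ × ℝ,
      ‖iteratedFDeriv ℝ i (fun z : ℝ × ℝ => φ z.1 z.2) z‖ ≤ M)
    (hper1 : ∀ y s : ℝ, φ (y + 1) s = φ y s)
    (hper2 : ∀ y s : ℝ, φ y (s + 1) = φ y s) :
    ∃ C > (0 : ℝ), ∀ ε η τ : ℝ, 0 < ε → 0 < η → 0 < τ →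
      |(∫ y in (0 : ℝ)..1, ∫ s in (0 : ℝ)..1, φ y s) -
          ∫ ξ : ℝ, ∫ s : ℝ, (η⁻¹ * K (ξ / η)) * (τ⁻¹ * K (s / τ)) * φ (ξ / ε) (s / ε)| ≤
        C * ((ε / η) ^ q + (ε / τ) ^ q) := by
  have hKs : HasCompactSupport K := .of_support_subset_isCompact isCompact_Icc hKsupp
  obtain ⟨M, hM⟩ := hφbdd 0 q.zero_le
  have hφM : ∀ y s, |φ y s| ≤ M := fun y s => by simpa using hM (y, s)
  have hM₀ : 0 ≤ M := (abs_nonneg _).trans (hφM 0 0)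
  set A := (∫ x, |iteratedDeriv q K x|) * (2 ^ q * (2 * M))
  set J := ∫ x, |K x|
  have hA : 0 ≤ A := by positivity
  have hJ : 0 ≤ J := by positivity
  refine ⟨A * (1 + J) + 1, by positivity, fun ε η τ hε hη hτ => ?_⟩
  calc _ ≤ A * ((ε / η) ^ q + J * (ε / τ) ^ q) :=
        abs_intervalIntegral_sub_integral_kernel_mul_kernel_le hK hKs hKint hφ.continuous hφM
          hper1 hper2 hε hη hτ
    _ ≤ (A * (1 + J) + 1) * ((ε / η) ^ q + (ε / τ) ^ q) := by
        nlinarith [mul_nonneg hA hJ, pow_nonneg (div_pos hε hη).le q,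
          pow_nonneg (div_pos hε hτ).le q]

/-- **High-order kernel averaging of a space-time periodic oscillatory function.**
For `K ∈ 𝕂^{p,q}` and `φ(y,s)` 1-periodic in each variable with all partial
derivatives up to order `q` continuous and bounded, the weighted average
`∬ K_η(ξ) K_τ(s) φ(ξ/ε, s/ε) dξ ds` approximates the mean value
`v̄ = ∫₀¹∫₀¹ φ` with error `C [(ε/η)^q + (ε/τ)^q]`. -/
theorem stmt_2 (p q : ℕ) (hp : 1 ≤ p) (hq : 1 ≤ q)
    (K : ℝ → ℝ) (hK : ContDiff ℝ (q : ℕ∞) K)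
    (hKsupp : Function.support K ⊆ Icc (-1 : ℝ) 1)
    (hKint : ∫ x : ℝ, K x = 1)
    (hKmom : ∀ j : ℕ, 1 ≤ j → j ≤ p → ∫ x : ℝ, K x * x ^ j = 0)
    (φ : ℝ → ℝ → ℝ)
    (hφ : ContDiff ℝ (q : ℕ∞) fun z : ℝ × ℝ => φ z.1 z.2)
    (hφbdd : ∀ i : ℕ, i ≤ q → ∃ M : ℝ, ∀ z : ℝ × ℝ,
      ‖iteratedFDeriv ℝ i (fun z : ℝ × ℝ => φ z.1 z.2) z‖ ≤ M)
    (hper1 : ∀ y s : ℝ, φ (y + 1) s = φ y s)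
    (hper2 : ∀ y s : ℝ, φ y (s + 1) = φ y s) :
    ∃ C > (0 : ℝ), ∀ ε η τ : ℝ, 0 < ε → 0 < η → 0 < τ →
      |(∫ y in (0 : ℝ)..1, ∫ s in (0 : ℝ)..1, φ y s) -
          ∫ ξ : ℝ, ∫ s : ℝ, (η⁻¹ * K (ξ / η)) * (τ⁻¹ * K (s / τ)) * φ (ξ / ε) (s / ε)| ≤
        C * ((ε / η) ^ q + (ε / τ) ^ q) :=
  stmt_2_general q K hK hKsupp hKint φ hφ hφbdd hper1 hper2
end

section
/- Let ε > 0. Let Q ∈ L¹(ℝ) be such that its Fourier transform 𝔉Q(k) := ∫_ℝ Q(x) e^{−ikx} dx vanishes for all |k| ≥ π/ε. Let κ ∈ ℝ and let ψ : ℝ → ℂ be 1-periodic and continuously differentiable. Define b(κ;ψ) := ∫_{−1/2}^{1/2} conj(ψ(x)) dx and, for k ∈ ℝ, q̂(k) := ∫_ℝ Q(x) conj(ψ(x/ε)) e^{−ikx} dx. Then for every k with |k| ≤ π/ε and with ψ the function above (playing the role of ψ_m(·, εk)): q̂(k) = 𝔉Q(k) · b(κ;ψ), i.e. q̂(k) =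 𝔉Q(k) ∫_{−1/2}^{1/2} conj(ψ(x)) dx. -/
/-!
Since `ψ` is `C¹` and 1-periodic, its Fourier coefficients satisfy `2πin c_n = d_n`, where `d_n` are
those of `ψ'`. As `∑ |d_n|² < ∞` (Parseval) and `∑ 1/n² < ∞`, the `c_n` are absolutely summable and
`ψ(x/ε) = ∑ c_n e^{2πinx/ε}` everywhere. Integrating term by term against `Q`,
`q̂(k) = ∑ conj(c_n) 𝔉Q(k + 2πn/ε)`. For `n ≠ 0` and `|k| ≤ π/ε` the frequency `k + 2πn/ε` lies
outside the band, so only the mean `c_0 = ∫_{-1/2}^{1/2} ψ` survives.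
-/

open MeasureTheory Complex ComplexConjugate

theorem summable_norm_of_summable_sq_abs_mul_norm {E : Type*} [SeminormedAddCommGroup E]
    {c : ℤ → E} (h : Summable fun n : ℤ => (|(n : ℝ)| * ‖c n‖) ^ 2) :
    Summable fun n => ‖c n‖ := by
  have hinv : Summable fun n : ℤ => |(n : ℝ)|⁻¹ ^ 2 := by
    simpa [inv_pow, sq_abs] using (Real.summable_one_div_int_pow (p := 2)).mpr one_lt_two
  refine Summable.of_norm_bounded_eventually ((h.add hinv).div_const 2) ?_
  filter_upwards [(Set.finite_singleton (0 : ℤ)).compl_mem_cofinite] with n hn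
  have hn0 : |(n : ℝ)| ≠ 0 := by simpa using hn
  rw [norm_norm]
  calc ‖c n‖ = (|(n : ℝ)| * ‖c n‖) * |(n : ℝ)|⁻¹ := by field_simp
    _ ≤ _ := by nlinarith [two_mul_le_add_sq (|(n : ℝ)| * ‖c n‖) |(n : ℝ)|⁻¹]

section Periodic

variable {f f' : ℝ → ℂ} {T : ℝ} (hT : 0 < T)

theorem fourierCoeffOn_eq_of_hasDerivAt_of_periodic (hper : Function.Periodic f T)
    (hf : ∀ x, HasDerivAt f (f' x) x) (hf' : IntervalIntegrable f' volume 0 T) {n : ℤ}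
    (hn : n ≠ 0) :
    fourierCoeffOn hT f n = T / (2 * Real.pi * I * n) * fourierCoeffOn hT f' n := by
  rw [fourierCoeffOn_of_hasDerivAt hT hn (fun x _ => hf x) hf', hper.eq, sub_self]
  have : (2 * Real.pi * I * n : ℂ) ≠ 0 := by simp [hn, Real.pi_ne_zero]
  field_simp
  push_cast
  ring

theorem summable_norm_fourierCoeffOn_of_periodic (hper : Function.Periodic f T)
    (hf : ∀ x, HasDerivAt f (f' x) x) (hf' : Continuous f') :
    Summable fun n => ‖fourierCoeffOn hT f n‖ := by
  have hL2 : MemLp f' 2 (volume.restrict (Set.Ioc 0 T)) :=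
    (memLp_two_iff_integrable_sq_norm hf'.aestronglyMeasurable).2
      ((hf'.norm.pow 2).integrableOn_Icc.mono_set Set.Ioc_subset_Icc_self)
  have hd := (hasSum_sq_fourierCoeffOn hT hL2).summable.mul_left ((T / (2 * Real.pi)) ^ 2)
  refine summable_norm_of_summable_sq_abs_mul_norm
    (hd.of_nonneg_of_le (fun n => sq_nonneg _) fun n => ?_)
  rcases eq_or_ne n 0 with rfl | hn
  · simp only [Int.cast_zero, abs_zero, zero_mul, ne_eq, OfNat.ofNat_ne_zero,
      not_false_eq_true, zero_pow]
    positivity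
  · rw [fourierCoeffOn_eq_of_hasDerivAt_of_periodic hT hper hf (hf'.intervalIntegrable 0 T) hn,
      ← mul_pow]
    apply le_of_eq
    congr 1
    have hn' : (n : ℝ) ≠ 0 := by exact_mod_cast hn
    simp only [norm_mul, norm_div, Complex.norm_real, Complex.norm_ofNat, Complex.norm_I,
      Complex.norm_intCast, Real.norm_eq_abs, abs_of_pos hT, abs_of_pos Real.pi_pos]
    field_simp

theorem hasSum_fourierCoeffOn_mul_cexp_of_periodic (hper : Function.Periodic f T)
    (hcont : Continuous f) (hsum : Summable fun n => ‖fourierCoeffOn hT f n‖) (x : ℝ) :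
    HasSum (fun n : ℤ => fourierCoeffOn hT f n * exp (2 * Real.pi * I * n * x / T)) (f x) := by
  have : Fact (0 < T) := ⟨hT⟩
  let F : C(AddCircle T, ℂ) := ⟨hper.lift, continuous_coinduced_dom.mpr hcont⟩
  have hcoeff : fourierCoeff F = fourierCoeffOn hT f := by
    ext n
    rw [fourierCoeff_eq_intervalIntegral _ n 0, fourierCoeffOn_eq_integral]
    simp only [fourier_coe_apply, sub_zero, zero_add, F, ContinuousMap.coe_mk,
      Function.Periodic.lift_coe]
  have h := has_pointwise_sum_fourier_series_of_summable (hcoeff ▸ hsum.of_norm) (x : AddCircle T)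
  rw [hcoeff] at h
  simpa only [fourier_coe_apply, smul_eq_mul, F, ContinuousMap.coe_mk,
    Function.Periodic.lift_coe] using h

end Periodic

/-- Unlike `𝓕`, which uses `e^{-2πixξ}`, this is the angular convention `∫ Q x e^{-ikx} dx`. -/
noncomputable def angularFourierTransform (Q : ℝ → ℂ) (k : ℝ) : ℂ := ∫ x, Q x * exp (-(I * k * x))

theorem norm_cexp_neg_I_mul_ofReal_mul (k x : ℝ) : ‖exp (-(I * k * x))‖ = 1 := by
  rw [show -(I * k * x) = ((-(k * x) : ℝ) : ℂ) * I by push_cast; ring]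
  exact norm_exp_ofReal_mul_I _

theorem MeasureTheory.Integrable.mul_cexp_neg_I_mul {Q : ℝ → ℂ} (hQ : Integrable Q) (k : ℝ) :
    Integrable fun x : ℝ => Q x * exp (-(I * k * x)) :=
  hQ.mul_bdd (by fun_prop : Continuous fun x : ℝ => exp (-(I * k * x))).aestronglyMeasurable
    (ae_of_all _ fun x => (norm_cexp_neg_I_mul_ofReal_mul k x).le)

theorem integral_mul_conj_mul_cexp_eq_tsum {ι : Type*} [Countable ι] {Q φ : ℝ → ℂ}
    (hQ : Integrable Q) {c : ι → ℂ} {ω : ι → ℝ} (hc : Summable fun i => ‖c i‖)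
    (hφ : ∀ x : ℝ, HasSum (fun i => c i * exp (I * ω i * x)) (φ x)) (k : ℝ) :
    ∫ x, Q x * conj (φ x) * exp (-(I * k * x)) =
      ∑' i, conj (c i) * angularFourierTransform Q (k + ω i) := by
  set F : ι → ℝ → ℂ := fun i x => conj (c i) * (Q x * exp (-(I * (k + ω i : ℝ) * x))) with hF
  have hterm (x : ℝ) : HasSum (F · x) (Q x * conj (φ x) * exp (-(I * k * x))) := by
    have h := ((hφ x).star).mul_left (Q x * exp (-(I * k * x)))
    rw [Complex.star_def, show Q x * exp (-(I * k * x)) * conj (φ x) =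
      Q x * conj (φ x) * exp (-(I * k * x)) by ring] at h
    refine h.congr_fun fun i => ?_
    rw [map_mul, ← exp_conj]
    simp only [hF, map_mul, conj_I, conj_ofReal, ofReal_add]
    rw [show -(I * (k + ω i) * x) = -(I * k * x) + -I * ω i * x by ring, exp_add]
    ring
  have hnorm : Summable fun i => ∫ x, ‖F i x‖ := by
    simp only [hF, norm_mul, norm_cexp_neg_I_mul_ofReal_mul, mul_one,
      integral_const_mul]
    simpa using hc.mul_right (∫ x, ‖Q x‖)
  calc ∫ x, Q x * conj (φ x) * exp (-(I * k * x)) = ∫ x, ∑' i, F i x :=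
        integral_congr_ae (ae_of_all _ fun x => (hterm x).tsum_eq.symm)
    _ = ∑' i, ∫ x, F i x :=
        (integral_tsum_of_summable_integral_norm
          (fun i => (hQ.mul_cexp_neg_I_mul _).const_mul _) hnorm).symm
    _ = _ := by simp only [hF, integral_const_mul, angularFourierTransform]

theorem le_abs_add_two_mul_mul_intCast {a k : ℝ} (hk : |k| ≤ a) {n : ℤ} (hn : n ≠ 0) :
    a ≤ |k + 2 * a * n| := by
  have ha : 0 ≤ a := (abs_nonneg k).trans hk
  have hn1 : (1 : ℝ) ≤ |(n : ℝ)| := by exact_mod_cast Int.one_le_abs hn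
  have htri : |2 * a * n| ≤ |k + 2 * a * n| + |k| := by
    simpa using abs_sub (k + 2 * a * n) k
  rw [abs_mul, abs_of_nonneg (by positivity : 0 ≤ 2 * a)] at htri
  nlinarith

theorem stmt_5_general (ε : ℝ)
    (Q : ℝ → ℂ) (hQ : Integrable Q)
    (hband : ∀ k : ℝ, Real.pi / ε ≤ |k| →
      (∫ x : ℝ, Q x * Complex.exp (-(Complex.I * k * x))) = 0)
    (ψ : ℝ → ℂ) (hψper : ∀ x : ℝ, ψ (x + 1) = ψ x) (hψ : ContDiff ℝ 1 ψ)
    (k : ℝ) (hk : |k| ≤ Real.pi / ε) :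
    ∫ x : ℝ, Q x * starRingEnd ℂ (ψ (x / ε)) * Complex.exp (-(Complex.I * k * x)) =
      (∫ x : ℝ, Q x * Complex.exp (-(Complex.I * k * x))) *
        ∫ x in (-(1 : ℝ) / 2)..(1 / 2), starRingEnd ℂ (ψ x) := by
  have hper : Function.Periodic ψ 1 := hψper
  have hcoeff := summable_norm_fourierCoeffOn_of_periodic one_pos hper
    (fun x => (hψ.differentiable one_ne_zero x).hasDerivAt) (hψ.continuous_deriv le_rfl)
  have hseries (x : ℝ) : HasSum (fun n : ℤ => fourierCoeffOn one_pos ψ n *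
      exp (I * (2 * (Real.pi / ε) * n : ℝ) * x)) (ψ (x / ε)) := by
    convert hasSum_fourierCoeffOn_mul_cexp_of_periodic one_pos hper hψ.continuous hcoeff (x / ε)
      using 4
    push_cast
    field_simp
  have hmean : fourierCoeffOn one_pos ψ 0 = ∫ x in (-(1 : ℝ) / 2)..(1 / 2), ψ x := by
    have h := hper.intervalIntegral_add_eq 0 (-1 / 2)
    norm_num at h
    rw [fourierCoeffOn_eq_integral]
    norm_num [h, neg_div]
  change _ = angularFourierTransform Q k * _
  rw [integral_mul_conj_mul_cexp_eq_tsum hQ hcoeff hseries k,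
    tsum_eq_single 0 fun n hn => by
      rw [angularFourierTransform, hband _ (le_abs_add_two_mul_mul_intCast hk hn), mul_zero],
    hmean, intervalIntegral.intervalIntegral_conj]
  simp only [Int.cast_zero, mul_zero, add_zero]
  ring

/-- **Bloch coefficients of band-limited functions.**
If `Q ∈ L¹(ℝ)` has Fourier transform `𝔉Q(k) = ∫ Q(x) e^{-ikx} dx` vanishing for
`|k| ≥ π/ε`, and `ψ` is a 1-periodic `C¹` function (the Bloch-wave profile), then
for `|k| ≤ π/ε` the Bloch coefficient
`q̂(k) = ∫ Q(x) conj(ψ(x/ε)) e^{-ikx} dx` factorizes as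
`q̂(k) = 𝔉Q(k) · ∫_{-1/2}^{1/2} conj(ψ(x)) dx`. -/
theorem stmt_5 (ε : ℝ) (hε : 0 < ε)
    (Q : ℝ → ℂ) (hQ : Integrable Q)
    (hband : ∀ k : ℝ, Real.pi / ε ≤ |k| →
      (∫ x : ℝ, Q x * Complex.exp (-(Complex.I * k * x))) = 0)
    (κ : ℝ)
    (ψ : ℝ → ℂ) (hψper : ∀ x : ℝ, ψ (x + 1) = ψ x) (hψ : ContDiff ℝ 1 ψ)
    (k : ℝ) (hk : |k| ≤ Real.pi / ε) :
    ∫ x : ℝ, Q x * starRingEnd ℂ (ψ (x / ε)) * Complex.exp (-(Complex.I * k * x)) =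
      (∫ x : ℝ, Q x * Complex.exp (-(Complex.I * k * x))) *
        ∫ x in (-(1 : ℝ) / 2)..(1 / 2), starRingEnd ℂ (ψ x) :=
  stmt_5_general ε Q hQ hband ψ hψper hψ k hk
end

section
/- Let p, q ≥ 1 be integers and K ∈ 𝕂^{p,q}. Let ω : ℝ → ℝ be p times continuously differentiable with ω(0) = 0, and let ε, η > 0. Define s(k) := ∫_ℝ K_η(t) cos( ω(k) t / ε ) dt. Then s is p times differentiable at k = 0, s(0) = 1, and s^{(r)}(0) = 0 for every r with 1 ≤ r ≤ p. -/
/-!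
Substituting `t = η x` gives `s = Re ∘ 𝓕K ∘ w` with `w(k) = η ω(k) / (2π ε)`, where `𝓕K` is the
Fourier transform of the compactly supported kernel `K`. Since `(𝓕K)⁽ʲ⁾(0) = (-2πi)ʲ ∫ K(x) xʲ dx`,
the normalisation gives `𝓕K(0) = 1` and the moment conditions kill the derivatives of orders
`1, …, p` at `0`. By Faà di Bruno's formula, a derivative of order `1, …, p` of `g ∘ w` at `0` is
a combination of derivatives of `g` of orders `1, …, p` at `w(0) = 0`, so these vanish for `s` too.
-/

open MeasureTheory Real FourierTransform

theorem ContinuousLinearMap.iteratedDeriv_comp_left {𝕜 E F : Type*} [NontriviallyNormedField 𝕜]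
    [NormedAddCommGroup E] [NormedSpace 𝕜 E] [NormedAddCommGroup F] [NormedSpace 𝕜 F]
    {f : 𝕜 → E} {x : 𝕜} {n : WithTop ℕ∞} (L : E →L[𝕜] F) (hf : ContDiffAt 𝕜 n f x) {i : ℕ}
    (hi : i ≤ n) : iteratedDeriv i (L ∘ f) x = L (iteratedDeriv i f x) := by
  simp only [iteratedDeriv_eq_iteratedFDeriv, L.iteratedFDeriv_comp_left hf hi]
  rfl

theorem iteratedDeriv_comp_eq_zero_of_iteratedDeriv_eq_zero {𝕜 F : Type*}
    [NontriviallyNormedField 𝕜] [NormedAddCommGroup F] [NormedSpace 𝕜 F]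
    {g : 𝕜 → F} {f : 𝕜 → 𝕜} {x : 𝕜} {n : ℕ}
    (hg : ContDiffAt 𝕜 n g (f x)) (hf : ContDiffAt 𝕜 n f x)
    (hg0 : ∀ j, 1 ≤ j → j ≤ n → iteratedDeriv j g (f x) = 0) {i : ℕ} (hi : 1 ≤ i) (hin : i ≤ n) :
    iteratedDeriv i (g ∘ f) x = 0 := by
  rw [iteratedDeriv_scomp_eq_sum_orderedFinpartition hg hf (by exact_mod_cast hin)]
  refine Finset.sum_eq_zero fun c _ => ?_
  rw [hg0 c.length (c.length_pos hi) (c.length_le.trans hin), smul_zero]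

theorem integral_inv_smul_comp_div {E : Type*} [NormedAddCommGroup E] [NormedSpace ℝ E]
    (f : ℝ → E) {η : ℝ} (hη : 0 < η) : ∫ t, η⁻¹ • f (t / η) = ∫ x, f x := by
  rw [integral_smul, Measure.integral_comp_div, abs_of_pos hη, inv_smul_smul₀ hη.ne']

theorem Continuous.integrable_pow_smul_of_hasCompactSupport {E : Type*} [NormedAddCommGroup E]
    [NormedSpace ℝ E] {f : ℝ → E} (hf : Continuous f) (hfs : HasCompactSupport f) (k : ℕ) :
    Integrable fun x => x ^ k • f x :=
  ((continuous_pow k).smul hf).integrable_of_hasCompactSupport hfs.smul_left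

namespace Real

theorem contDiff_fourier_of_hasCompactSupport {E : Type*} [NormedAddCommGroup E]
    [NormedSpace ℂ E] {f : ℝ → E} (hf : Continuous f) (hfs : HasCompactSupport f) {N : ℕ∞} :
    ContDiff ℝ N (𝓕 f) :=
  contDiff_fourier fun k _ => by
    simpa [norm_smul] using (hf.integrable_pow_smul_of_hasCompactSupport hfs k).norm

theorem iteratedDeriv_fourier_zero {E : Type*} [NormedAddCommGroup E] [NormedSpace ℂ E]
    {f : ℝ → E} {n : ℕ} (hf : ∀ k ≤ n, Integrable fun x => x ^ k • f x) :
    iteratedDeriv n (𝓕 f) 0 = (-2 * π * Complex.I) ^ n • ∫ x, x ^ n • f x := by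
  rw [iteratedDeriv_fourier (N := n) (fun k hk => hf k (by exact_mod_cast hk)) le_rfl,
    fourier_real_eq]
  simp only [mul_zero, neg_zero, AddChar.map_zero_eq_one, one_smul]
  rw [← integral_smul]
  congr 1 with x
  rw [mul_pow, mul_smul, ← Complex.ofReal_pow, Complex.coe_smul]

theorem iteratedDeriv_fourier_ofReal_zero {f : ℝ → ℝ} (hf : Continuous f)
    (hfs : HasCompactSupport f) (n : ℕ) :
    iteratedDeriv n (𝓕 fun x => (f x : ℂ)) 0 =
      (-2 * π * Complex.I) ^ n * (∫ x, f x * x ^ n : ℝ) := by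
  have hfc : Continuous fun x => (f x : ℂ) := by fun_prop
  rw [iteratedDeriv_fourier_zero fun k _ => hfc.integrable_pow_smul_of_hasCompactSupport
    (hfs.comp_left Complex.ofReal_zero) k, ← integral_complex_ofReal, smul_eq_mul]
  simp only [Complex.real_smul, Complex.ofReal_mul, Complex.ofReal_pow, mul_comm]

theorem re_fourier_ofReal {f : ℝ → ℝ} (hf : Integrable f) (w : ℝ) :
    (𝓕 (fun x => (f x : ℂ)) w).re = ∫ v, f v * cos (2 * π * v * w) := by
  have hint : Integrable fun v : ℝ => 𝐞 (-inner ℝ v w) • (f v : ℂ) :=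
    (fourierIntegral_convergent_iff w).2 hf.ofReal
  rw [fourier_eq, ← RCLike.re_to_complex, ← integral_re hint]
  congr 1 with v
  rw [RCLike.re_to_complex, Circle.smul_def, smul_eq_mul, Complex.re_mul_ofReal, fourierChar_apply,
    Complex.exp_ofReal_mul_I_re, Real.inner_apply, mul_neg, cos_neg, mul_comm, ← mul_assoc]

theorem integral_inv_mul_comp_div_mul_cos_eq_re_fourier {f : ℝ → ℝ} (hf : Integrable f)
    {η : ℝ} (hη : 0 < η) (a : ℝ) :
    ∫ t, η⁻¹ * f (t / η) * cos (a * t) = (𝓕 (fun x => (f x : ℂ)) (η * a / (2 * π))).re := by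
  rw [re_fourier_ofReal hf,
    ← integral_inv_smul_comp_div (fun v => f v * cos (2 * π * v * (η * a / (2 * π)))) hη]
  congr 1 with t
  rw [smul_eq_mul, mul_assoc]
  congr 3
  field_simp

end Real

theorem stmt_10_general (p q : ℕ)
    (K : ℝ → ℝ) (hK : ContDiff ℝ (q : ℕ∞) K)
    (hKsupp : Function.support K ⊆ Set.Icc (-1 : ℝ) 1)
    (hKint : ∫ x : ℝ, K x = 1)
    (hKmom : ∀ j : ℕ, 1 ≤ j → j ≤ p → ∫ x : ℝ, K x * x ^ j = 0)
    (ω : ℝ → ℝ) (hω : ContDiff ℝ (p : ℕ∞) ω) (hω0 : ω 0 = 0)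
    (ε η : ℝ) (hη : 0 < η)
    (s : ℝ → ℝ)
    (hs : ∀ k : ℝ, s k = ∫ t : ℝ, (η⁻¹ * K (t / η)) * Real.cos (ω k * t / ε)) :
    ContDiffAt ℝ (p : ℕ∞) s 0 ∧ s 0 = 1 ∧
      ∀ r : ℕ, 1 ≤ r → r ≤ p → iteratedDeriv r s 0 = 0 := by
  have hKc : Continuous K := hK.continuous
  have hKcs : HasCompactSupport K := .of_support_subset_isCompact isCompact_Icc hKsupp
  set F := 𝓕 fun x => (K x : ℂ)
  have hF : ContDiff ℝ p F :=
    contDiff_fourier_of_hasCompactSupport (by fun_prop) (hKcs.comp_left Complex.ofReal_zero)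
  have hF_deriv (n : ℕ) :
      iteratedDeriv n F 0 = (-2 * π * Complex.I) ^ n * (∫ x, K x * x ^ n : ℝ) :=
    iteratedDeriv_fourier_ofReal_zero hKc hKcs n
  set w : ℝ → ℝ := fun k => η * (ω k / ε) / (2 * π)
  have hw : ContDiff ℝ p w := by fun_prop
  have hs_comp : s = (Complex.reCLM ∘ F) ∘ w := by
    funext k
    simp_rw [hs, mul_div_right_comm _ _ ε]
    exact integral_inv_mul_comp_div_mul_cos_eq_re_fourier
      (hKc.integrable_of_hasCompactSupport hKcs) hη _
  refine ⟨?_, ?_, fun r hr hrp => ?_⟩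
  · rw [hs_comp]
    exact ((Complex.reCLM.contDiff.comp hF).comp hw).contDiffAt
  · simpa [hs_comp, w, hω0, hKint] using congrArg Complex.re (hF_deriv 0)
  · rw [hs_comp]
    refine iteratedDeriv_comp_eq_zero_of_iteratedDeriv_eq_zero
      (Complex.reCLM.contDiff.comp hF).contDiffAt hw.contDiffAt (fun j hj hjp => ?_) hr hrp
    rw [Complex.reCLM.iteratedDeriv_comp_left hF.contDiffAt (by exact_mod_cast hjp)]
    simp [w, hω0, hF_deriv, hKmom j hj hjp]

/-- **Vanishing derivatives of the time-averaging factor at zero frequency.**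
For `K ∈ 𝕂^{p,q}` and a `C^p` dispersion relation `ω` with `ω(0) = 0`, the
time-averaging factor `s(k) = ∫ K_η(t) cos(ω(k) t/ε) dt` is `p` times
differentiable at `k = 0`, with `s(0) = 1` and `s^{(r)}(0) = 0` for `1 ≤ r ≤ p`. -/
theorem stmt_10 (p q : ℕ) (hp : 1 ≤ p) (hq : 1 ≤ q)
    (K : ℝ → ℝ) (hK : ContDiff ℝ (q : ℕ∞) K)
    (hKsupp : Function.support K ⊆ Set.Icc (-1 : ℝ) 1)
    (hKint : ∫ x : ℝ, K x = 1)
    (hKmom : ∀ j : ℕ, 1 ≤ j → j ≤ p → ∫ x : ℝ, K x * x ^ j = 0)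
    (ω : ℝ → ℝ) (hω : ContDiff ℝ (p : ℕ∞) ω) (hω0 : ω 0 = 0)
    (ε η : ℝ) (hε : 0 < ε) (hη : 0 < η)
    (s : ℝ → ℝ)
    (hs : ∀ k : ℝ, s k = ∫ t : ℝ, (η⁻¹ * K (t / η)) * Real.cos (ω k * t / ε)) :
    ContDiffAt ℝ (p : ℕ∞) s 0 ∧ s 0 = 1 ∧
      ∀ r : ℕ, 1 ≤ r → r ≤ p → iteratedDeriv r s 0 = 0 :=
  stmt_10_general p q K hK hKsupp hKint hKmom ω hω hω0 ε η hη s hs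
end

section
/- Let K : ℝ → ℝ be continuously differentiable with support contained in [−1,1], and let a : ℝ → ℝ be 1-periodic and continuously differentiable. Let ε, η > 0 with α := ε/η ≤ 1, let k ∈ ℝ, and let ψ : ℝ → ℂ be 1-periodic, locally square-integrable, with ∫₀¹ |ψ(x)|² dx = 1. Define h̃(x) := −(ε/η²) K′(x/η) a(x/ε) − (1/η) K(x/η) a′(x/ε) and w := ∫_ℝ h̃(x) ψ(x/ε) e^{i k x/ε} dx. Then |w| ≤ C, where C depends only on K and a (in particular, C is independent of ε, η, k and ψ). -/
/-!
Since `K` and `K'` vanish outside `[-1, 1]` and `ε ≤ η`, the coefficient `h̃` is bounded by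
`M / η` and supported in `[-η, η]`, with `M = ‖K'‖∞ ‖a‖∞ + ‖K‖∞ ‖a'‖∞`. Hence
`|w| ≤ (M / η) ∫_{-η}^{η} |ψ(x/ε)| dx = (M ε / η) ∫_{-η/ε}^{η/ε} |ψ|`. The last interval is covered
by at most `4 η / ε` periods, and `∫₀¹ |ψ| ≤ (1 + ∫₀¹ |ψ|²) / 2 = 1`, so `|w| ≤ 4 M`.
-/

open MeasureTheory

/-- Lebesgue measure restricted to one period `(0,1]`, giving the space `L²(0,1)`. -/
noncomputable def μ01 : Measure ℝ := volume.restrict (Set.Ioc (0 : ℝ) 1)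

open Set Function

instance : IsProbabilityMeasure μ01 := ⟨by simp [μ01]⟩

theorem Function.Periodic.deriv {𝕜 F : Type*} [NontriviallyNormedField 𝕜] [NormedAddCommGroup F]
    [NormedSpace 𝕜 F] {f : 𝕜 → F} {c : 𝕜} (hf : Periodic f c) : Periodic (deriv f) c :=
  fun x => by rw [← deriv_comp_add_const, hf.funext]

theorem Function.Periodic.exists_norm_le_of_continuous {E : Type*} [SeminormedAddCommGroup E]
    {f : ℝ → E} {c : ℝ} (hf : Periodic f c) (hc : c ≠ 0) (hcont : Continuous f) :
    ∃ C, ∀ x, ‖f x‖ ≤ C := by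
  obtain ⟨C, hC⟩ := isBounded_iff_forall_norm_le.1 (hf.isBounded_of_continuous hc hcont)
  exact ⟨C, fun x => hC _ (mem_range_self x)⟩

theorem apply_div_eq_zero_of_support_subset_Icc {E : Type*} [Zero E] {f : ℝ → E}
    (hf : support f ⊆ Icc (-1) 1) {η x : ℝ} (hη : 0 < η) (hx : x ∉ Icc (-η) η) :
    f (x / η) = 0 := by
  by_contra h
  obtain ⟨h₁, h₂⟩ := hf h
  exact hx ⟨by rwa [le_div_iff₀ hη, neg_one_mul] at h₁, by rwa [div_le_iff₀ hη, one_mul] at h₂⟩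

theorem Function.Periodic.intervalIntegral_neg_le {f : ℝ → ℝ} {T L : ℝ} (hf : Periodic f T)
    (hT : 0 < T) (hf₀ : ∀ x, 0 ≤ f x) (hfi : IntervalIntegrable f volume 0 T) (hTL : T ≤ L) :
    ∫ x in -L..L, f x ≤ 4 * (L / T) * ∫ x in 0..T, f x := by
  have hint := hf.intervalIntegrable₀ hT.ne' hfi
  set n : ℕ := ⌈L / T⌉₊
  have hLn : L ≤ n * T := (div_le_iff₀ hT).1 (Nat.le_ceil _)
  have hn : (n : ℝ) ≤ 2 * (L / T) := by
    have := Nat.ceil_lt_add_one (div_nonneg (hT.le.trans hTL) hT.le)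
    have : 1 ≤ L / T := (one_le_div hT).2 hTL
    linarith
  have hperiods : ∫ x in -(n * T)..n * T, f x = 2 * n * ∫ x in 0..T, f x := by
    have h := hf.intervalIntegral_add_zsmul_eq (2 * n) (-(n * T)) hint
    rw [hf.intervalIntegral_add_eq _ 0, zero_add, zsmul_eq_mul, zsmul_eq_mul] at h
    push_cast at h
    rwa [show -(n * T) + 2 * n * T = n * T by ring] at h
  calc ∫ x in -L..L, f x ≤ ∫ x in -(n * T)..n * T, f x :=
        intervalIntegral.integral_mono_interval (by linarith) (by linarith) hLn
          (ae_of_all _ hf₀) (hint _ _)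
    _ = 2 * n * ∫ x in 0..T, f x := hperiods
    _ ≤ 4 * (L / T) * ∫ x in 0..T, f x := by
        have := intervalIntegral.integral_nonneg (μ := volume) hT.le fun x _ => hf₀ x
        exact mul_le_mul_of_nonneg_right (by linarith) this

theorem integral_norm_le_one_add_integral_norm_sq_div_two {α E : Type*} [MeasurableSpace α]
    [NormedAddCommGroup E] {μ : Measure α} [IsProbabilityMeasure μ] {f : α → E}
    (hf : MemLp f 2 μ) : ∫ x, ‖f x‖ ∂μ ≤ (1 + ∫ x, ‖f x‖ ^ 2 ∂μ) / 2 := by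
  have hsq : Integrable (fun x => ‖f x‖ ^ 2) μ := hf.integrable_norm_pow two_ne_zero
  calc ∫ x, ‖f x‖ ∂μ ≤ ∫ x, (1 + ‖f x‖ ^ 2) / 2 ∂μ :=
        integral_mono (hf.integrable one_le_two).norm (((integrable_const 1).add hsq).div_const 2)
          fun x => by nlinarith [sq_nonneg (‖f x‖ - 1)]
    _ = (1 + ∫ x, ‖f x‖ ^ 2 ∂μ) / 2 := by
        rw [integral_div, integral_add (integrable_const 1) hsq]; simp

theorem abs_flux_le {ε η p q r s P Q R S : ℝ} (hε : 0 ≤ ε) (hη : 0 < η) (hεη : ε ≤ η)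
    (hp : |p| ≤ P) (hq : |q| ≤ Q) (hr : |r| ≤ R) (hs : |s| ≤ S) :
    |-(ε / η ^ 2) * p * q - 1 / η * r * s| ≤ (P * Q + R * S) / η := by
  have hεη' : ε / η ^ 2 ≤ 1 / η := by
    rw [div_le_div_iff₀ (by positivity) hη]; nlinarith
  have hpq : |p * q| ≤ P * Q :=
    abs_mul p q ▸ mul_le_mul hp hq (abs_nonneg _) ((abs_nonneg _).trans hp)
  have hrs : |r * s| ≤ R * S :=
    abs_mul r s ▸ mul_le_mul hr hs (abs_nonneg _) ((abs_nonneg _).trans hr)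
  calc |-(ε / η ^ 2) * p * q - 1 / η * r * s|
      ≤ ε / η ^ 2 * |p * q| + 1 / η * |r * s| := by
        rw [show -(ε / η ^ 2) * p * q - 1 / η * r * s
            = -(ε / η ^ 2 * (p * q) + 1 / η * (r * s)) by ring, abs_neg]
        refine (abs_add_le _ _).trans_eq ?_
        rw [abs_mul (ε / η ^ 2), abs_mul (1 / η), abs_of_nonneg (by positivity : 0 ≤ ε / η ^ 2),
          abs_of_nonneg (by positivity : 0 ≤ 1 / η)]
    _ ≤ 1 / η * (P * Q) + 1 / η * (R * S) := by gcongr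
    _ = (P * Q + R * S) / η := by ring

theorem norm_integral_mul_periodic_comp_div_le {h : ℝ → ℝ} {ψ e : ℝ → ℂ} {ε η M : ℝ}
    (hε : 0 < ε) (hεη : ε ≤ η) (hψ : Periodic ψ 1)
    (hψi : IntervalIntegrable (fun y => ‖ψ y‖) volume 0 1) (hψ1 : ∫ y in 0..1, ‖ψ y‖ ≤ 1)
    (hh : ∀ x, |h x| ≤ M / η) (hsupp : ∀ x ∉ Icc (-η) η, h x = 0) (he : ∀ x, ‖e x‖ ≤ 1) :
    ‖∫ x, (h x : ℂ) * ψ (x / ε) * e x‖ ≤ 4 * M := by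
  have hη : 0 < η := hε.trans_le hεη
  have hM : 0 ≤ M / η := (abs_nonneg _).trans (hh 0)
  have hφ : Periodic (fun y => ‖ψ y‖) 1 := fun x => by simp only [hψ x]
  have hφε : IntervalIntegrable (fun x => ‖ψ (x / ε)‖) volume (-η) η := by
    have := (hφ.intervalIntegrable₀ one_ne_zero hψi (-η / ε) (η / ε)).comp_mul_right (c := ε⁻¹)
    rwa [div_inv_eq_mul, div_inv_eq_mul, div_mul_cancel₀ _ hε.ne', div_mul_cancel₀ _ hε.ne']
      at this
  have hle : ∀ x, ‖(h x : ℂ) * ψ (x / ε) * e x‖ ≤ M / η * ‖ψ (x / ε)‖ := fun x => by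
    rw [norm_mul, norm_mul, Complex.norm_real, Real.norm_eq_abs]
    exact mul_le_of_le_one_right (by positivity) (he x) |>.trans (by gcongr; exact hh x)
  calc ‖∫ x, (h x : ℂ) * ψ (x / ε) * e x‖ = ‖∫ x in -η..η, (h x : ℂ) * ψ (x / ε) * e x‖ := by
        rw [← setIntegral_eq_integral_of_forall_compl_eq_zero fun x hx => by simp [hsupp x hx],
          integral_Icc_eq_integral_Ioc, intervalIntegral.integral_of_le (by linarith)]
    _ ≤ ∫ x in -η..η, M / η * ‖ψ (x / ε)‖ :=
        intervalIntegral.norm_integral_le_of_norm_le (by linarith) (ae_of_all _ fun x _ => hle x)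
          (hφε.const_mul _)
    _ = M / η * (ε * ∫ y in -(η / ε)..η / ε, ‖ψ y‖) := by
        rw [intervalIntegral.integral_const_mul,
          intervalIntegral.integral_comp_div (fun y => ‖ψ y‖) hε.ne', neg_div, smul_eq_mul]
    _ ≤ M / η * (ε * (4 * (η / ε / 1) * 1)) := by
        gcongr
        exact (hφ.intervalIntegral_neg_le one_pos (fun _ => norm_nonneg _) hψi
          ((one_le_div hε).2 hεη)).trans (by gcongr)
    _ = 4 * M := by field_simp

/-- **Uniform bound on the space-averaged flux coefficient.**
With `K` a `C¹` kernel supported in `[-1,1]` and `a` 1-periodic `C¹`, there is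
`C > 0` depending only on `K` and `a` such that for all `ε, η > 0` with
`α = ε/η ≤ 1`, all `k ∈ ℝ`, and every 1-periodic locally square-integrable `ψ`
normalized by `∫₀¹ |ψ|² = 1`, the quantity
`w = ∫ h̃(x) ψ(x/ε) e^{ikx/ε} dx`, where
`h̃(x) = -(ε/η²) K'(x/η) a(x/ε) - (1/η) K(x/η) a'(x/ε)`, satisfies `|w| ≤ C`. -/
theorem stmt_12
    (K : ℝ → ℝ) (hK : ContDiff ℝ 1 K)
    (hKsupp : Function.support K ⊆ Set.Icc (-1 : ℝ) 1)
    (a : ℝ → ℝ) (ha : ContDiff ℝ 1 a) (haper : ∀ x : ℝ, a (x + 1) = a x) :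
    ∃ C > (0 : ℝ), ∀ ε η k : ℝ, 0 < ε → 0 < η → ε / η ≤ 1 →
      ∀ ψ : ℝ → ℂ, (∀ x : ℝ, ψ (x + 1) = ψ x) → MemLp ψ 2 μ01 →
        (∫ x in (0 : ℝ)..1, ‖ψ x‖ ^ 2) = 1 →
        ‖∫ x : ℝ, ((-(ε / η ^ 2) * deriv K (x / η) * a (x / ε) -
              (1 / η) * K (x / η) * deriv a (x / ε) : ℝ) : ℂ) *
            ψ (x / ε) * Complex.exp (Complex.I * k * x / ε)‖ ≤ C := by
  have hK'supp : support (deriv K) ⊆ Icc (-1) 1 :=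
    support_deriv_subset.trans (closure_minimal hKsupp isClosed_Icc)
  obtain ⟨MK, hMK⟩ := hK.continuous.bounded_above_of_compact_support
    (.of_support_subset_isCompact isCompact_Icc hKsupp)
  obtain ⟨MK', hMK'⟩ := (hK.continuous_deriv le_rfl).bounded_above_of_compact_support
    (.of_support_subset_isCompact isCompact_Icc hK'supp)
  obtain ⟨Ma, hMa⟩ := Periodic.exists_norm_le_of_continuous haper one_ne_zero ha.continuous
  obtain ⟨Ma', hMa'⟩ := Periodic.exists_norm_le_of_continuous (Periodic.deriv haper)
    one_ne_zero (ha.continuous_deriv le_rfl)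
  refine ⟨max (4 * (MK' * Ma + MK * Ma')) 1, lt_max_of_lt_right one_pos,
    fun ε η k hε hη hεη ψ hψ hψL2 hψnorm => le_max_of_le_left ?_⟩
  rw [div_le_one hη] at hεη
  have hψ1 : ∫ y in (0 : ℝ)..1, ‖ψ y‖ ≤ 1 := by
    have := integral_norm_le_one_add_integral_norm_sq_div_two hψL2
    rw [μ01, ← intervalIntegral.integral_of_le zero_le_one,
      ← intervalIntegral.integral_of_le zero_le_one, hψnorm] at this
    linarith
  refine norm_integral_mul_periodic_comp_div_le hε hεη hψ
    ((intervalIntegrable_iff_integrableOn_Ioc_of_le zero_le_one).2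
      (hψL2.integrable one_le_two).norm) hψ1
    (fun x => abs_flux_le hε.le hη hεη (hMK' _) (hMa _) (hMK _) (hMa' _))
    (fun x hx => ?_) (fun x => ?_)
  · simp [apply_div_eq_zero_of_support_subset_Icc hKsupp hη hx,
      apply_div_eq_zero_of_support_subset_Icc hK'supp hη hx]
  · rw [show Complex.I * k * x / ε = Complex.I * ((k * x / ε : ℝ) : ℂ) by push_cast; ring,
      Complex.norm_exp_I_mul_ofReal]
end

section
/- For each m ∈ ℕ and k ∈ [−1/2, 1/2], let ψ_m(x,k) be complex-valued, jointly measurable in (x,k), 1-periodic in x, and such that for each fixed k the family (ψ_m(·,k))_{m∈ℕ} is an orthonormal Hilbert basis of L²(0,1). Let h ∈ L²(ℝ) have compact support. Define c_m(k) := ∫_ℝ h(x) conj(ψ_m(x,k)) e^{−2πikx} dx. Then ∑_{m=0}^{∞} ∫_{−1/2}^{1/2} |c_m(k)|² dk = ∫_ℝ |h(x)|² dx. -/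
open MeasureTheory

/-! For `h` supported in `(a, b]` with `a, b ∈ ℤ`, the Zak transform
`z_k(x) = ∑_{a ≤ n < b} h(x + n) e^{-2πik(x+n)}` is, for each `k`, a function on one period whose
coefficients against the 1-periodic basis `ψ_m(·, k)` are exactly `c_m(k)`: split `∫_ℝ` into unit
intervals and use the periodicity of `ψ`. Parseval in `L²(0,1)` gives
`∑_m |c_m(k)|² = ∫_0^1 |z_k|²`. Integrating over the Brillouin zone `k ∈ (-1/2, 1/2]`, the
orthonormality of the characters `k ↦ e^{-2πikn}` turns `∫ |z_k(x)|² dk` into `∑_n |h(x + n)|²`,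
whose integral over one period is `∫_ℝ |h|²`. All sums and integrals are exchanged in `ℝ≥0∞`, where
this is free, and the identity is converted back to real numbers at the end. -/

open Set Function Complex
open scoped ENNReal InnerProductSpace

section UnitIntervals

variable {E : Type*} [NormedAddCommGroup E]

lemma Ioc_intCast_eq_biUnion (a b : ℤ) :
    Ioc (a : ℝ) b = ⋃ n ∈ Finset.Ico a b, Ioc (n : ℝ) (n + 1) := by
  ext x
  simp only [mem_Ioc, mem_iUnion, Finset.mem_Ico, exists_prop]
  constructor
  · rintro ⟨hax, hxb⟩
    refine ⟨⌈x⌉ - 1, ⟨?_, ?_⟩, ?_, ?_⟩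
    · have := Int.lt_ceil.2 hax
      omega
    · have := Int.ceil_le.2 hxb
      omega
    · push_cast
      linarith [Int.ceil_lt_add_one x]
    · push_cast
      linarith [Int.le_ceil x]
  · rintro ⟨n, ⟨han, hnb⟩, hnx, hxn⟩
    have han' : (a : ℝ) ≤ n := by exact_mod_cast han
    have hnb' : (n : ℝ) + 1 ≤ b := by exact_mod_cast hnb
    constructor <;> linarith

lemma measurePreserving_add_right_restrict_Ioc (t : ℝ) :
    MeasurePreserving (· + t) (volume.restrict (Ioc 0 1)) (volume.restrict (Ioc t (t + 1))) := by
  have h := (measurePreserving_add_right volume t).restrict_preimage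
    (measurableSet_Ioc (a := t) (b := t + 1))
  rwa [preimage_add_const_Ioc, sub_self, add_sub_cancel_left] at h

lemma setLIntegral_Ioc_add_one (f : ℝ → ℝ≥0∞) (t : ℝ) :
    ∫⁻ x in Ioc t (t + 1), f x = ∫⁻ x in Ioc 0 1, f (x + t) :=
  ((measurePreserving_add_right_restrict_Ioc t).lintegral_comp_emb
    (measurableEmbedding_addRight t) f).symm

lemma setIntegral_Ioc_add_one [NormedSpace ℝ E] (f : ℝ → E) (t : ℝ) :
    ∫ x in Ioc t (t + 1), f x = ∫ x in Ioc 0 1, f (x + t) :=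
  ((measurePreserving_add_right_restrict_Ioc t).integral_comp
    (measurableEmbedding_addRight t) f).symm

lemma integrableOn_Ioc_add_one_iff {f : ℝ → E} {t : ℝ} :
    IntegrableOn f (Ioc t (t + 1)) ↔ IntegrableOn (fun x => f (x + t)) (Ioc 0 1) :=
  ((measurePreserving_add_right_restrict_Ioc t).integrable_comp_emb
    (measurableEmbedding_addRight t)).symm

lemma lintegral_eq_sum_Ioc_of_support_subset {f : ℝ → ℝ≥0∞} {a b : ℤ}
    (hf : support f ⊆ Ioc (a : ℝ) b) :
    ∫⁻ x, f x = ∑ n ∈ Finset.Ico a b, ∫⁻ x in Ioc 0 1, f (x + n) := by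
  rw [← setLIntegral_eq_of_support_subset hf, Ioc_intCast_eq_biUnion,
    lintegral_biUnion_finset ((pairwise_disjoint_Ioc_intCast (α := ℝ)).set_pairwise _)
      (fun _ _ => measurableSet_Ioc)]
  simp_rw [setLIntegral_Ioc_add_one]

lemma integral_eq_sum_Ioc_of_support_subset [NormedSpace ℝ E] {f : ℝ → E} {a b : ℤ}
    (hf : support f ⊆ Ioc (a : ℝ) b)
    (hint : ∀ n ∈ Finset.Ico a b, IntegrableOn (fun x => f (x + n)) (Ioc 0 1)) :
    ∫ x, f x = ∑ n ∈ Finset.Ico a b, ∫ x in Ioc 0 1, f (x + n) := by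
  rw [← setIntegral_eq_integral_of_forall_compl_eq_zero
      fun x hx => notMem_support.1 (hx ∘ @hf x),
    Ioc_intCast_eq_biUnion, integral_biUnion_finset _ (fun _ _ => measurableSet_Ioc)
      ((pairwise_disjoint_Ioc_intCast (α := ℝ)).set_pairwise _)
      fun n hn => integrableOn_Ioc_add_one_iff.2 (hint n hn)]
  simp_rw [setIntegral_Ioc_add_one]

end UnitIntervals

lemma HilbertBasis.tsum_enorm_inner_sq {ι 𝕜 E : Type*} [RCLike 𝕜] [NormedAddCommGroup E]
    [InnerProductSpace 𝕜 E] (b : HilbertBasis ι 𝕜 E) (v : E) :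
    ∑' i, ‖⟪b i, v⟫_𝕜‖ₑ ^ 2 = ‖v‖ₑ ^ 2 := by
  have h := lp.hasSum_norm (p := 2) (by norm_num) (b.repr v)
  simp only [b.repr_apply_apply, LinearIsometryEquiv.norm_map, ENNReal.toReal_ofNat,
    Real.rpow_two] at h
  simp_rw [← ofReal_norm, ← ENNReal.ofReal_pow (norm_nonneg _)]
  rw [← ENNReal.ofReal_tsum_of_nonneg (fun _ => by positivity) h.summable, h.tsum_eq]

lemma HilbertBasis.tsum_enorm_inner_toLp_sq {ι 𝕜 α : Type*} [RCLike 𝕜] [MeasurableSpace α]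
    {μ : Measure α} (b : HilbertBasis ι 𝕜 (Lp 𝕜 2 μ)) {f : α → 𝕜} (hf : MemLp f 2 μ) :
    ∑' i, ‖⟪b i, hf.toLp f⟫_𝕜‖ₑ ^ 2 = ∫⁻ x, ‖f x‖ₑ ^ 2 ∂μ := by
  rw [b.tsum_enorm_inner_sq, Lp.enorm_toLp]
  have := eLpNorm_nnreal_pow_eq_lintegral (f := f) (μ := μ) (p := 2) two_ne_zero
  simpa using this

lemma HasCompactSupport.exists_support_subset_Ioc_intCast {E : Type*} [Zero E] {f : ℝ → E}
    (hf : HasCompactSupport f) : ∃ a b : ℤ, support f ⊆ Ioc (a : ℝ) b := by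
  obtain ⟨l, hl⟩ := hf.isCompact.bddBelow
  obtain ⟨u, hu⟩ := hf.isCompact.bddAbove
  refine ⟨⌊l⌋ - 1, ⌈u⌉, fun x hx => ⟨?_, ?_⟩⟩
  · push_cast
    linarith [Int.floor_le l, hl (subset_tsupport f hx)]
  · exact (hu (subset_tsupport f hx)).trans (Int.le_ceil u)

lemma integral_norm_sq_eq_toReal_lintegral {α E : Type*} [MeasurableSpace α] {μ : Measure α}
    [NormedAddCommGroup E] {f : α → E} (hf : AEStronglyMeasurable f μ) :
    ∫ x, ‖f x‖ ^ 2 ∂μ = (∫⁻ x, ‖f x‖ₑ ^ 2 ∂μ).toReal := by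
  rw [integral_eq_lintegral_of_nonneg_ae (f := fun x => ‖f x‖ ^ 2)
    (ae_of_all _ fun _ => by positivity) (hf.norm.pow 2)]
  simp_rw [ENNReal.ofReal_pow (norm_nonneg _), ofReal_norm]

noncomputable section

def brillouinZone : Set ℝ := Ioc (-(1 : ℝ) / 2) (1 / 2)

def blochPhase (k x : ℝ) : ℂ := exp (-(2 * Real.pi * I * k * x))

lemma norm_blochPhase (k x : ℝ) : ‖blochPhase k x‖ = 1 := by
  rw [blochPhase, show -(2 * Real.pi * I * k * x) = ((-(2 * Real.pi * k * x) : ℝ) : ℂ) * I by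
    push_cast; ring]
  exact norm_exp_ofReal_mul_I _

lemma conj_blochPhase_mul (k y z : ℝ) :
    starRingEnd ℂ (blochPhase k y) * blochPhase k z = blochPhase k (z - y) := by
  simp only [blochPhase, ← exp_conj, ← exp_add, map_neg, map_mul, conj_I, conj_ofReal, map_ofNat]
  push_cast
  ring_nf

lemma setIntegral_brillouinZone_blochPhase_intCast (n : ℤ) :
    ∫ k in brillouinZone, blochPhase k n = if n = 0 then 1 else 0 := by
  split_ifs with hn
  · simp [hn, blochPhase, brillouinZone, Real.volume_real_Ioc]; norm_num
  have hc : -(2 * Real.pi * I * n) ≠ 0 := by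
    simp [hn, Real.pi_ne_zero, I_ne_zero]
  have hexp : ∀ k : ℝ, blochPhase k n = exp (-(2 * Real.pi * I * n) * k) := fun k => by
    rw [blochPhase]; push_cast; ring_nf
  -- the endpoints `±1/2` differ by one period of `k ↦ blochPhase k n`
  have hperiod : exp (-(2 * Real.pi * I * n) * ((1 / 2 : ℝ) : ℂ)) =
      exp (-(2 * Real.pi * I * n) * ((-(1 : ℝ) / 2 : ℝ) : ℂ)) := by
    rw [show -(2 * Real.pi * I * n) * ((1 / 2 : ℝ) : ℂ) =
      -(2 * Real.pi * I * n) * ((-(1 : ℝ) / 2 : ℝ) : ℂ) + (-n : ℤ) * (2 * Real.pi * I) by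
        push_cast; ring, exp_add, exp_int_mul_two_pi_mul_I, mul_one]
  simp_rw [hexp, brillouinZone,
    ← intervalIntegral.integral_of_le (by norm_num : -(1 : ℝ) / 2 ≤ 1 / 2),
    integral_exp_mul_complex hc, hperiod, sub_self, zero_div]

lemma integral_brillouinZone_norm_sum_blochPhase_sq (S : Finset ℤ) (c : ℤ → ℂ) (x : ℝ) :
    ∫ k in brillouinZone, ‖∑ n ∈ S, c n * blochPhase k (x + n)‖ ^ 2 = ∑ n ∈ S, ‖c n‖ ^ 2 := by
  have hint : ∀ n n' : ℤ, IntegrableOn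
      (fun k => starRingEnd ℂ (c n) * c n' * blochPhase k ((n' - n : ℤ) : ℝ)) brillouinZone :=
    fun n n' => Continuous.integrableOn_Ioc (by unfold blochPhase; fun_prop)
  apply ofReal_injective
  push_cast
  rw [← integral_complex_ofReal]
  simp_rw [ofReal_pow, ← conj_mul', map_sum, Finset.sum_mul_sum, map_mul]
  calc ∫ k in brillouinZone, ∑ n ∈ S, ∑ n' ∈ S, starRingEnd ℂ (c n) *
        starRingEnd ℂ (blochPhase k (x + n)) * (c n' * blochPhase k (x + n'))
      = ∫ k in brillouinZone, ∑ n ∈ S, ∑ n' ∈ S,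
          starRingEnd ℂ (c n) * c n' * blochPhase k ((n' - n : ℤ) : ℝ) := by
        congr 1; ext k
        refine Finset.sum_congr rfl fun n _ => Finset.sum_congr rfl fun n' _ => ?_
        have h := conj_blochPhase_mul k (x + n) (x + n')
        rw [show x + n' - (x + n) = ((n' - n : ℤ) : ℝ) by push_cast; ring] at h
        rw [← h]
        ring
    _ = ∑ n ∈ S, ∑ n' ∈ S, starRingEnd ℂ (c n) * c n' * if n' - n = 0 then 1 else 0 := by
        rw [integral_finsetSum _ fun n _ => integrable_finsetSum _ fun n' _ => hint n n']
        refine Finset.sum_congr rfl fun n _ => ?_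
        rw [integral_finsetSum _ fun n' _ => hint n n']
        simp_rw [integral_const_mul, setIntegral_brillouinZone_blochPhase_intCast]
    _ = ∑ n ∈ S, starRingEnd ℂ (c n) * c n := by
        refine Finset.sum_congr rfl fun n hn => ?_
        simp [sub_eq_zero, hn]

lemma lintegral_brillouinZone_enorm_sum_blochPhase_sq (S : Finset ℤ) (c : ℤ → ℂ) (x : ℝ) :
    ∫⁻ k in brillouinZone, ‖∑ n ∈ S, c n * blochPhase k (x + n)‖ₑ ^ 2 = ∑ n ∈ S, ‖c n‖ₑ ^ 2 := by
  have hcont : Continuous fun k => ‖∑ n ∈ S, c n * blochPhase k (x + n)‖ ^ 2 := by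
    unfold blochPhase; fun_prop
  simp_rw [← ofReal_norm, ← ENNReal.ofReal_pow (norm_nonneg _)]
  rw [← ofReal_integral_eq_lintegral_ofReal (μ := volume.restrict brillouinZone)
      hcont.integrableOn_Ioc (ae_of_all _ fun _ => by positivity),
    integral_brillouinZone_norm_sum_blochPhase_sq,
    ENNReal.ofReal_sum_of_nonneg fun _ _ => by positivity]

-- The Zak transform `∑_{n ∈ ℤ} h(x + n) e^{-2πik(x+n)}`, truncated to `n ∈ S`; for `h` supported
-- in `(a, b]` the truncation to `Finset.Ico a b` loses nothing.
def zakTransform (S : Finset ℤ) (h : ℝ → ℂ) (k x : ℝ) : ℂ :=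
  ∑ n ∈ S, h (x + n) * blochPhase k (x + n)

section ZakTransform

variable {h : ℝ → ℂ}

lemma memLp_comp_add_mul_blochPhase (hh : MemLp h 2 volume) (k t : ℝ) :
    MemLp (fun x => h (x + t) * blochPhase k (x + t)) 2 volume := by
  have hhk : MemLp (fun x => h x * blochPhase k x) 2 volume :=
    hh.of_le (hh.1.mul (by unfold blochPhase; fun_prop : Continuous _).aestronglyMeasurable)
      (ae_of_all _ fun x => by simp [norm_blochPhase])
  exact hhk.comp_measurePreserving (measurePreserving_add_right volume t)

lemma memLp_zakTransform (S : Finset ℤ) (hh : MemLp h 2 volume) (k : ℝ) :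
    MemLp (zakTransform S h k) 2 volume :=
  memLp_finsetSum S fun n _ => memLp_comp_add_mul_blochPhase hh k n

lemma aestronglyMeasurable_uncurry_zakTransform (S : Finset ℤ)
    (hh : AEStronglyMeasurable h volume) (μ : Measure ℝ) (s : Set ℝ) :
    AEStronglyMeasurable (uncurry (zakTransform S h)) (μ.prod (volume.restrict s)) :=
  Finset.aestronglyMeasurable_fun_sum S fun n _ =>
    (hh.comp_measurePreserving (measurePreserving_add_right volume (n : ℝ))).restrict.comp_snd.mul
      (by unfold blochPhase; fun_prop : Continuous _).aestronglyMeasurable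

theorem lintegral_lintegral_enorm_zakTransform_sq {a b : ℤ} (hh : AEStronglyMeasurable h volume)
    (hsupp : support h ⊆ Ioc (a : ℝ) b) :
    ∫⁻ k in brillouinZone, ∫⁻ x in Ioc 0 1, ‖zakTransform (Finset.Ico a b) h k x‖ₑ ^ 2 =
      ∫⁻ x, ‖h x‖ₑ ^ 2 := by
  rw [lintegral_lintegral_swap
    ((aestronglyMeasurable_uncurry_zakTransform _ hh _ _).enorm.pow_const 2)]
  simp_rw [zakTransform, lintegral_brillouinZone_enorm_sum_blochPhase_sq]
  have hmeas_shift (n : ℤ) : AEStronglyMeasurable (fun x => h (x + n)) (volume.restrict (Ioc 0 1)) :=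
    (hh.comp_measurePreserving (measurePreserving_add_right volume (n : ℝ))).restrict
  rw [lintegral_finsetSum' (f := fun (n : ℤ) x => ‖h (x + n)‖ₑ ^ 2) _
      fun n _ => (hmeas_shift n).enorm.pow_const 2,
    lintegral_eq_sum_Ioc_of_support_subset (fun x hx => hsupp (by simpa using hx))]

lemma integral_mul_conj_mul_blochPhase_eq_setIntegral_zakTransform {φ : ℝ → ℂ} {a b : ℤ}
    (hφ : Periodic φ 1) (hφ2 : MemLp φ 2 (volume.restrict (Ioc 0 1))) (hh : MemLp h 2 volume)
    (hsupp : support h ⊆ Ioc (a : ℝ) b) (k : ℝ) :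
    ∫ x, h x * starRingEnd ℂ (φ x) * blochPhase k x =
      ∫ x in Ioc 0 1, starRingEnd ℂ (φ x) * zakTransform (Finset.Ico a b) h k x := by
  have hshift : ∀ n : ℤ, ∀ x : ℝ, h (x + n) * starRingEnd ℂ (φ (x + n)) * blochPhase k (x + n) =
      starRingEnd ℂ (φ x) * (h (x + n) * blochPhase k (x + n)) := fun n x => by
    rw [show φ (x + n) = φ x by simpa using hφ.int_mul n x]
    ring
  have hint : ∀ n : ℤ, IntegrableOn
      (fun x => starRingEnd ℂ (φ x) * (h (x + n) * blochPhase k (x + n))) (Ioc 0 1) := fun n =>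
    hφ2.star.integrable_mul ((memLp_comp_add_mul_blochPhase hh k n).restrict _)
  rw [integral_eq_sum_Ioc_of_support_subset
      (((support_mul_subset_left _ _).trans (support_mul_subset_left _ _)).trans hsupp)
      fun n _ => by simpa only [hshift] using hint n]
  simp_rw [hshift, zakTransform, Finset.mul_sum]
  rw [integral_finsetSum _ fun n _ => hint n]

lemma aestronglyMeasurable_integral_mul_conj_mul_blochPhase {φ : ℝ → ℝ → ℂ}
    (hh : AEStronglyMeasurable h volume) (hφ : Measurable (uncurry φ)) :
    AEStronglyMeasurable (fun k => ∫ x, h x * starRingEnd ℂ (φ x k) * blochPhase k x) volume :=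
  AEStronglyMeasurable.integral_prod_right'
    (f := fun p : ℝ × ℝ => h p.2 * starRingEnd ℂ (φ p.2 p.1) * blochPhase p.1 p.2)
    ((hh.comp_snd.mul (continuous_conj.measurable.comp
      (hφ.comp measurable_swap)).aestronglyMeasurable).mul
      (by unfold blochPhase; fun_prop : Continuous _).aestronglyMeasurable)

end ZakTransform

end

/-- **Parseval identity for the Bloch (Floquet–Zak) decomposition.**
If for each quasimomentum `k` the 1-periodic functions `(ψ_m(·,k))_m` form an
orthonormal Hilbert basis of `L²(0,1)` (jointly measurably in `(x,k)`), and
`h ∈ L²(ℝ)` has compact support, then the Bloch coefficients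
`c_m(k) = ∫ h(x) conj(ψ_m(x,k)) e^{-2πikx} dx` satisfy
`∑_m ∫_{-1/2}^{1/2} |c_m(k)|² dk = ∫ |h|²`. -/
theorem stmt_13
    (ψ : ℕ → ℝ → ℝ → ℂ)
    (hmeas : ∀ m : ℕ, Measurable fun z : ℝ × ℝ => ψ m z.1 z.2)
    (hper : ∀ m : ℕ, ∀ x k : ℝ, ψ m (x + 1) k = ψ m x k)
    (B : ℝ → HilbertBasis ℕ ℂ (Lp ℂ 2 μ01))
    (hB : ∀ k : ℝ, ∀ m : ℕ, ⇑(B k m) =ᵐ[μ01] fun x => ψ m x k)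
    (h : ℝ → ℂ) (hh : MemLp h 2 volume) (hhsupp : HasCompactSupport h)
    (c : ℕ → ℝ → ℂ)
    (hc : ∀ m : ℕ, ∀ k : ℝ, c m k =
      ∫ x : ℝ, h x * starRingEnd ℂ (ψ m x k) *
        Complex.exp (-(2 * Real.pi * Complex.I * k * x))) :
    ∑' m : ℕ, ∫ k in (-(1 : ℝ) / 2)..(1 / 2), ‖c m k‖ ^ 2 =
      ∫ x : ℝ, ‖h x‖ ^ 2 := by
  obtain ⟨a, b, hsupp⟩ := hhsupp.exists_support_subset_Ioc_intCast
  set z := zakTransform (Finset.Ico a b) h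
  have hz : ∀ k, MemLp (z k) 2 μ01 := fun k => (memLp_zakTransform _ hh k).restrict _
  have hcoeff : ∀ m k, c m k = ⟪B k m, (hz k).toLp (z k)⟫_ℂ := fun m k => by
    rw [hc, L2.inner_def]
    refine (integral_mul_conj_mul_blochPhase_eq_setIntegral_zakTransform (fun x => hper m x k)
      ((Lp.memLp (B k m)).ae_eq (hB k m)) hh hsupp k).trans (integral_congr_ae ?_)
    filter_upwards [hB k m, (hz k).coeFn_toLp] with x hψ hzx
    rw [hψ, hzx, RCLike.inner_apply, mul_comm]
  have hcm : ∀ m, AEStronglyMeasurable (c m) volume := fun m => by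
    rw [funext (hc m)]
    exact aestronglyMeasurable_integral_mul_conj_mul_blochPhase hh.1 (hmeas m)
  have hsum : ∑' m, ∫⁻ k in brillouinZone, ‖c m k‖ₑ ^ 2 = ∫⁻ x, ‖h x‖ₑ ^ 2 := by
    rw [← lintegral_tsum fun m => (hcm m).restrict.enorm.pow_const 2]
    simp_rw [hcoeff, HilbertBasis.tsum_enorm_inner_toLp_sq]
    exact lintegral_lintegral_enorm_zakTransform_sq hh.1 hsupp
  have hfin : ∫⁻ x, ‖h x‖ₑ ^ 2 ≠ ∞ := by
    simpa [enorm_pow] using hh.norm.integrable_sq.hasFiniteIntegral.ne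
  calc ∑' m, ∫ k in (-(1 : ℝ) / 2)..(1 / 2), ‖c m k‖ ^ 2
      = ∑' m, (∫⁻ k in brillouinZone, ‖c m k‖ₑ ^ 2).toReal := by
        simp_rw [intervalIntegral.integral_of_le (by norm_num : -(1 : ℝ) / 2 ≤ 1 / 2)]
        exact tsum_congr fun m => integral_norm_sq_eq_toReal_lintegral (hcm m).restrict
    _ = (∫⁻ x, ‖h x‖ₑ ^ 2).toReal := by
        rw [← hsum]
        exact (ENNReal.tsum_toReal_eq fun m =>
          ne_top_of_le_ne_top (hsum ▸ hfin) (ENNReal.le_tsum m)).symm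
    _ = ∫ x, ‖h x‖ ^ 2 := (integral_norm_sq_eq_toReal_lintegral hh.1).symm
end
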